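/- Let d ≥ 1 and n ∈ ℕ, let g_d(z) = (z − 1)^d, and let p_n be the n-th optimal polynomial approximant to 1/g_d in H²_ω. Let E be the d×d matrix with entries E_{i,j} = ∑_{k=0}^{n+d} k^{i+j-2}/ω_k for 1 ≤ i, j ≤ d (with the convention 0^0 = 1). Then E is invertible, and setting (A_{1,n}, …, A_{d,n})^t = E^{-1} · (1, 0, …, 0)^t, for every k with 0 ≤ k ≤ n + d the coefficient of z^k in the polynomial 1 − p_n g_d equals (A_{1,n} + A_{2,n} k + … + A_{d,n} k^{d-1})/ω_k; moreover ‖1 − p_n g_d‖²_ω = (1 − p_n g_d)(0) = A_{1,n} = (E^{-1})_{1,1}. -/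

import Mathlib

/-!
Write `F = 1 - p g`. Optimality of `p` makes `F` orthogonal, in the weighted inner product, to
every `q g` with `deg q ≤ n`. Testing against `q = X ^ m` shows that `b k = ω k * F.coeff k`
satisfies, for `k ≤ n + d`, the linear recurrence with characteristic polynomial `(X - 1) ^ d`,
so `b k = Q k` for a polynomial `Q` of degree `< d`. Since `(X - 1) ^ (i + 1)` divides `p g` for
`i < d`, the moments `∑ k, F.coeff k * k ^ i` equal `δ_{i0}`; substituting
`F.coeff k = Q k / ω k` this says `E β = e₁` for the coefficient vector `β` of `Q`, and `E` is
positive definite, so `β = E⁻¹ e₁`. Finally `‖F‖² = ⟪F, 1 - p g⟫ = ⟪F, 1⟫ = F(0)`.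
-/

/-- The squared weighted `H²_ω` norm of a polynomial `g = ∑ a_k z^k`,
namely `∑_k |a_k|² ω_k`. -/
noncomputable def wnormSq (ω : ℕ → ℝ) (g : Polynomial ℂ) : ℝ :=
  ∑ k ∈ Finset.range (g.natDegree + 1), ‖g.coeff k‖ ^ 2 * ω k

open Polynomial Finset Matrix

section Moments

variable {R : Type*} [CommRing R]

lemma coeff_X_mul_derivative (h : R[X]) (k : ℕ) : (X * derivative h).coeff k = k * h.coeff k := by
  cases k with
  | zero => simp
  | succ k => rw [coeff_X_mul, coeff_derivative]; push_cast; ring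

lemma natDegree_X_mul_derivative_le (h : R[X]) : (X * derivative h).natDegree ≤ h.natDegree :=
  natDegree_le_iff_coeff_eq_zero.2 fun k hk => by
    rw [coeff_X_mul_derivative, coeff_eq_zero_of_natDegree_lt hk, mul_zero]

/-- Applying `X * d/dX` `i` times turns `∑ h_k k^i` into an evaluation at `1`, which vanishes
when `(X - 1)^(i+1) ∣ h`. -/
lemma sum_range_coeff_mul_pow_eq_zero {h : R[X]} {i N : ℕ} (hdvd : (X - C 1) ^ (i + 1) ∣ h)
    (hN : h.natDegree < N) : ∑ k ∈ range N, h.coeff k * (k : R) ^ i = 0 := by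
  induction i generalizing h with
  | zero =>
    have h1 : h.eval 1 = 0 := dvd_iff_isRoot.1 (by simpa only [zero_add, pow_one] using hdvd)
    simpa [eval_eq_sum_range' hN] using h1
  | succ i ih =>
    have hdvd' : (X - C 1) ^ (i + 1) ∣ X * derivative h :=
      dvd_mul_of_dvd_right (pow_sub_one_dvd_derivative_of_pow_dvd hdvd) X
    rw [← ih hdvd' ((natDegree_X_mul_derivative_le h).trans_lt hN)]
    refine sum_congr rfl fun k _ => ?_
    rw [coeff_X_mul_derivative, pow_succ]
    ring

lemma sum_range_coeff_mul_eval_eq_zero {h Q : R[X]} {d N : ℕ} (hdvd : (X - C 1) ^ d ∣ h)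
    (hQ : Q.natDegree < d) (hN : h.natDegree < N) :
    ∑ k ∈ range N, h.coeff k * Q.eval (k : R) = 0 := by
  simp_rw [eval_eq_sum_range' hQ, mul_sum]
  rw [sum_comm]
  refine sum_eq_zero fun j hj => ?_
  simp_rw [mul_left_comm _ (Q.coeff j)]
  rw [← mul_sum, sum_range_coeff_mul_pow_eq_zero
    ((pow_dvd_pow _ (mem_range.1 hj)).trans hdvd) hN, mul_zero]

lemma sum_range_coeff_one_sub_mul_pow {h : R[X]} {d i N : ℕ} (hdvd : (X - C 1) ^ d ∣ h)
    (hi : i < d) (hN : h.natDegree < N) :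
    ∑ k ∈ range N, (1 - h).coeff k * (k : R) ^ i = 0 ^ i := by
  have hN0 : 0 ∈ range N := mem_range.2 (by omega)
  simp_rw [coeff_sub, sub_mul, sum_sub_distrib,
    sum_range_coeff_mul_pow_eq_zero ((pow_dvd_pow _ hi).trans hdvd) hN, coeff_one, ite_mul,
    one_mul, zero_mul, sum_ite_eq' _ _ _, if_pos hN0, Nat.cast_zero, sub_zero]

end Moments

lemma eq_zero_of_sum_coeff_X_pow_mul_eq_zero {R : Type*} [Semiring R] {g : R[X]} (hg : g.Monic)
    {n : ℕ} {e : ℕ → R}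
    (he : ∀ m ≤ n, ∑ k ∈ range (n + g.natDegree + 1), (X ^ m * g).coeff k * e k = 0)
    (h0 : ∀ k < g.natDegree, e k = 0) : ∀ k ≤ n + g.natDegree, e k = 0 := by
  intro k
  induction k using Nat.strong_induction_on with
  | _ k ih =>
    intro hk
    obtain hkd | hkd := lt_or_ge k g.natDegree
    · exact h0 k hkd
    obtain ⟨m, rfl⟩ := Nat.exists_eq_add_of_le hkd
    have hdeg : (X ^ m * g).natDegree ≤ g.natDegree + m :=
      natDegree_mul_le.trans (by rw [add_comm]; gcongr; exact natDegree_X_pow_le m)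
    rw [← he m (by omega), sum_eq_single (g.natDegree + m), coeff_X_pow_mul, hg.coeff_natDegree,
      one_mul]
    · intro j _ hj
      obtain hjk | hjk := lt_or_gt_of_ne hj
      · rw [ih j hjk (by omega), mul_zero]
      · rw [coeff_eq_zero_of_natDegree_lt (hdeg.trans_lt hjk), zero_mul]
    · exact fun h => absurd (mem_range.2 (by omega)) h

lemma exists_natDegree_lt_eval_eq_of_sum_coeff_eq_zero {K : Type*} [Field K] [CharZero K]
    {d n : ℕ} (hd : 0 < d) {b : ℕ → K}
    (hb : ∀ m ≤ n, ∑ k ∈ range (n + d + 1), (X ^ m * (X - C 1) ^ d : K[X]).coeff k * b k = 0) :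
    ∃ Q : K[X], Q.natDegree < d ∧ ∀ k ≤ n + d, b k = Q.eval (k : K) := by
  have hinj : Set.InjOn (fun k : ℕ => (k : K)) (range d) := Nat.cast_injective.injOn
  set Q := Lagrange.interpolate (range d) (fun k : ℕ => (k : K)) b
  have hQ : Q.natDegree < d := by
    by_cases hQ0 : Q = 0
    · rwa [hQ0, natDegree_zero]
    · rw [natDegree_lt_iff_degree_lt hQ0]
      simpa only [card_range] using Lagrange.degree_interpolate_lt b hinj
  have hg : ((X - C 1) ^ d : K[X]).natDegree = d := by
    rw [natDegree_pow, natDegree_X_sub_C, mul_one]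
  refine ⟨Q, hQ, fun k hk => sub_eq_zero.1 ?_⟩
  refine eq_zero_of_sum_coeff_X_pow_mul_eq_zero (e := fun k => b k - Q.eval (k : K))
    ((monic_X_sub_C (1 : K)).pow d) ?_ ?_ k (by rwa [hg])
  · intro m hm
    have hN : (X ^ m * (X - C 1) ^ d : K[X]).natDegree < n + d + 1 :=
      (natDegree_mul_le.trans (add_le_add (natDegree_X_pow_le m) hg.le)).trans_lt (by omega)
    simp_rw [hg, mul_sub, sum_sub_distrib, hb m hm,
      sum_range_coeff_mul_eval_eq_zero (dvd_mul_left _ _) hQ hN, sub_zero]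
  · intro k hk
    rw [hg] at hk
    rw [Lagrange.eval_interpolate_at_node b hinj (mem_range.2 hk), sub_self]

noncomputable def momentMatrix (ω : ℕ → ℝ) (N d : ℕ) : Matrix (Fin d) (Fin d) ℝ :=
  Matrix.of fun i j => ∑ k ∈ range N, (k : ℝ) ^ ((i : ℕ) + (j : ℕ)) / ω k

/-- `momentMatrix ω N d = Vᵀ D V` with `V k i = k ^ i` and `D = diag (1 / ω k)`; the first `d`
rows of `V` form an invertible Vandermonde matrix. -/
lemma momentMatrix_posDef {ω : ℕ → ℝ} (hω : ∀ k, 0 < ω k) {N d : ℕ} (hdN : d ≤ N) :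
    (momentMatrix ω N d).PosDef := by
  set V : Matrix (Fin N) (Fin d) ℝ := Matrix.of fun k i => (k : ℝ) ^ (i : ℕ)
  have hE : momentMatrix ω N d = Vᴴ * diagonal (fun k : Fin N => (ω k)⁻¹) * V := by
    ext i j
    simp only [momentMatrix, V, Matrix.of_apply, Matrix.mul_apply, Matrix.diagonal_apply,
      Matrix.conjTranspose_apply, star_trivial, mul_ite, mul_zero, sum_ite_eq', mem_univ, if_true]
    rw [Fin.sum_univ_eq_sum_range (fun k => (k : ℝ) ^ (i : ℕ) * (ω k)⁻¹ * (k : ℝ) ^ (j : ℕ)) N]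
    refine sum_congr rfl fun k _ => ?_
    rw [pow_add]; ring
  have hV : Function.Injective V.mulVec := by
    intro v w hvw
    have hdet : (Matrix.vandermonde fun i : Fin d => (i : ℝ)).det ≠ 0 :=
      Matrix.det_vandermonde_ne_zero_iff.2 fun i j h => Fin.ext (by exact_mod_cast h)
    refine (Matrix.mulVec_injective_iff_isUnit.2 (Matrix.isUnit_iff_isUnit_det _ |>.2
      hdet.isUnit)) (funext fun i => ?_)
    simpa [Matrix.mulVec, dotProduct, V] using congrFun hvw (Fin.castLE hdN i)
  rw [hE]
  exact (posDef_diagonal_iff.2 fun k : Fin N => inv_pos.2 (hω k)).conjTranspose_mul_mul_same hV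

lemma mapMatrix_momentMatrix_mulVec {ω : ℕ → ℝ} {N d : ℕ} {Q : ℂ[X]} (hQ : Q.natDegree < d) :
    Complex.ofRealHom.mapMatrix (momentMatrix ω N d) *ᵥ (fun j : Fin d => Q.coeff j) =
      fun i : Fin d => ∑ k ∈ range N, (k : ℂ) ^ (i : ℕ) * Q.eval (k : ℂ) / ω k := by
  ext i
  simp only [Matrix.mulVec, dotProduct, RingHom.mapMatrix_apply, Matrix.map_apply,
    momentMatrix, Matrix.of_apply, Complex.ofRealHom_eq_coe, Complex.ofReal_sum,
    Complex.ofReal_div, Complex.ofReal_pow, Complex.ofReal_natCast, eval_eq_sum_range' hQ,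
    sum_mul, mul_sum, sum_div]
  rw [Fin.sum_univ_eq_sum_range (fun j => ∑ k ∈ range N,
    (k : ℂ) ^ ((i : ℕ) + j) / (ω k : ℂ) * Q.coeff j) d, sum_comm]
  refine sum_congr rfl fun k _ => sum_congr rfl fun j _ => ?_
  rw [pow_add]; ring

lemma eq_comp_inv_mulVec_of_mapMatrix_mulVec_eq {R S n : Type*} [CommRing R] [CommRing S]
    [Fintype n] [DecidableEq n] (f : R →+* S) {E : Matrix n n R} (hE : IsUnit E.det)
    {β : n → S} {v : n → R} (h : f.mapMatrix E *ᵥ β = f ∘ v) : β = f ∘ (E⁻¹ *ᵥ v) := by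
  have hinv : f.mapMatrix E⁻¹ * f.mapMatrix E = 1 := by
    rw [← map_mul, Matrix.nonsing_inv_mul _ hE, map_one]
  calc β = (f.mapMatrix E⁻¹ * f.mapMatrix E) *ᵥ β := by rw [hinv, Matrix.one_mulVec]
    _ = f.mapMatrix E⁻¹ *ᵥ (f ∘ v) := by rw [← Matrix.mulVec_mulVec, h]
    _ = f ∘ (E⁻¹ *ᵥ v) := by ext i; exact (RingHom.map_mulVec f E⁻¹ v i).symm

lemma inner_eq_zero_of_forall_norm_le_norm_sub_smul {𝕜 E : Type*} [RCLike 𝕜]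
    [NormedAddCommGroup E] [InnerProductSpace 𝕜 E] {u w : E}
    (h : ∀ t : 𝕜, ‖u‖ ≤ ‖u - t • w‖) : inner 𝕜 u w = 0 := by
  have hmin : ‖u - 0‖ = ⨅ x : 𝕜 ∙ w, ‖u - x‖ := by
    refine le_antisymm (le_ciInf fun ⟨x, hx⟩ => ?_) (ciInf_le ⟨0, ?_⟩ (0 : 𝕜 ∙ w))
    · obtain ⟨t, rfl⟩ := Submodule.mem_span_singleton.1 hx
      simpa using h t
    · rintro _ ⟨x, rfl⟩; exact norm_nonneg _
  simpa using ((𝕜 ∙ w).norm_eq_iInf_iff_inner_eq_zero (zero_mem _)).1 hmin w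
    (Submodule.mem_span_singleton_self w)

lemma wnormSq_eq_sum_range (ω : ℕ → ℝ) {P : ℂ[X]} {N : ℕ} (hN : P.natDegree < N) :
    wnormSq ω P = ∑ k ∈ range N, ‖P.coeff k‖ ^ 2 * ω k := by
  refine sum_subset (range_subset_range.2 hN) fun k _ hk => ?_
  rw [coeff_eq_zero_of_natDegree_lt (by simpa using hk), norm_zero]
  ring

noncomputable def weightedCoeffs (ω : ℕ → ℝ) (N : ℕ) : ℂ[X] →ₗ[ℂ] EuclideanSpace ℂ (Fin N) where
  toFun P := WithLp.toLp 2 fun k => (√(ω k) : ℂ) * P.coeff k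
  map_add' P Q := by ext k; simp [mul_add]
  map_smul' c P := by ext k; simp; ring

section WeightedCoeffs

variable {ω : ℕ → ℝ} {N : ℕ}

lemma inner_weightedCoeffs (hω : ∀ k, 0 ≤ ω k) (P Q : ℂ[X]) :
    inner ℂ (weightedCoeffs ω N P) (weightedCoeffs ω N Q) =
      ∑ k ∈ range N, starRingEnd ℂ (P.coeff k) * (ω k * Q.coeff k) := by
  rw [weightedCoeffs, LinearMap.coe_mk, AddHom.coe_mk, EuclideanSpace.inner_toLp_toLp, dotProduct,
    ← Fin.sum_univ_eq_sum_range (fun k => starRingEnd ℂ (P.coeff k) * (ω k * Q.coeff k)) N]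
  refine sum_congr rfl fun k _ => ?_
  have hsq : (√(ω k) : ℂ) * √(ω k) = ω k := by
    rw [← Complex.ofReal_mul, Real.mul_self_sqrt (hω k)]
  simp only [Pi.star_apply, RCLike.star_def, map_mul, Complex.conj_ofReal, ← hsq]
  ring

lemma norm_weightedCoeffs_sq (hω : ∀ k, 0 ≤ ω k) {P : ℂ[X]} (hP : P.natDegree < N) :
    ‖weightedCoeffs ω N P‖ ^ 2 = wnormSq ω P := by
  rw [wnormSq_eq_sum_range ω hP, EuclideanSpace.norm_sq_eq,
    ← Fin.sum_univ_eq_sum_range (fun k => ‖P.coeff k‖ ^ 2 * ω k) N]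
  refine sum_congr rfl fun k _ => ?_
  simp only [weightedCoeffs, LinearMap.coe_mk, AddHom.coe_mk, norm_mul, Complex.norm_real,
    Real.norm_eq_abs, abs_of_nonneg (Real.sqrt_nonneg _), mul_pow, Real.sq_sqrt (hω k)]
  ring

end WeightedCoeffs

lemma natDegree_one_sub_mul_lt {R : Type*} [Ring R] {g r : R[X]} {n : ℕ} (hr : r.natDegree ≤ n) :
    (1 - r * g).natDegree < n + g.natDegree + 1 := by
  have := (natDegree_sub_le 1 (r * g)).trans (max_le_max le_rfl natDegree_mul_le)
  rw [natDegree_one] at this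
  omega

section OptimalApproximant

variable {ω : ℕ → ℝ} {g p : ℂ[X]} {n : ℕ}

lemma inner_weightedCoeffs_one_sub_mul_eq_zero (hω : ∀ k, 0 ≤ ω k) (hpdeg : p.natDegree ≤ n)
    (hpopt : ∀ q : ℂ[X], q.natDegree ≤ n → wnormSq ω (1 - p * g) ≤ wnormSq ω (1 - q * g))
    {q : ℂ[X]} (hq : q.natDegree ≤ n) :
    inner ℂ (weightedCoeffs ω (n + g.natDegree + 1) (q * g))
      (weightedCoeffs ω (n + g.natDegree + 1) (1 - p * g)) = 0 := by
  refine inner_eq_zero_symm.1 <| inner_eq_zero_of_forall_norm_le_norm_sub_smul fun t => ?_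
  have hpq : (p + C t * q).natDegree ≤ n :=
    natDegree_add_le_of_degree_le hpdeg ((natDegree_C_mul_le t q).trans hq)
  rw [← map_smul, ← map_sub, smul_eq_C_mul,
    show 1 - p * g - C t * (q * g) = 1 - (p + C t * q) * g by ring,
    ← sq_le_sq₀ (norm_nonneg _) (norm_nonneg _),
    norm_weightedCoeffs_sq hω (natDegree_one_sub_mul_lt hpdeg),
    norm_weightedCoeffs_sq hω (natDegree_one_sub_mul_lt hpq)]
  exact hpopt _ hpq

/-- The residual `F = 1 - p g` is orthogonal to `p g`, so `‖F‖² = ⟪1, F⟫ = ω 0 * F(0)`. -/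
lemma wnormSq_one_sub_mul_eq (hω : ∀ k, 0 ≤ ω k) (hpdeg : p.natDegree ≤ n)
    (hpopt : ∀ q : ℂ[X], q.natDegree ≤ n → wnormSq ω (1 - p * g) ≤ wnormSq ω (1 - q * g)) :
    (wnormSq ω (1 - p * g) : ℂ) = ω 0 * (1 - p * g).coeff 0 := by
  rw [← norm_weightedCoeffs_sq hω (natDegree_one_sub_mul_lt hpdeg), Complex.ofReal_pow,
    ← RCLike.ofReal_eq_complex_ofReal, ← inner_self_eq_norm_sq_to_K]
  nth_rw 1 [map_sub]
  rw [inner_sub_left,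
    inner_weightedCoeffs_one_sub_mul_eq_zero hω hpdeg hpopt hpdeg, sub_zero,
    inner_weightedCoeffs hω, sum_eq_single 0 (fun k _ hk => by simp [coeff_one, hk]) (by simp)]
  simp

end OptimalApproximant

/-- Orthogonality of the residual to `X ^ m * (X - 1) ^ d` is a linear recurrence with
characteristic polynomial `(X - 1) ^ d` for `ω k * (1 - p g).coeff k`, whose solutions are the
polynomials of degree `< d` in `k`. -/
lemma exists_natDegree_lt_coeff_one_sub_mul_eq {ω : ℕ → ℝ} (hω : ∀ k, 0 < ω k) {d n : ℕ}
    (hd : 0 < d) {p : ℂ[X]} (hpdeg : p.natDegree ≤ n)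
    (hpopt : ∀ q : ℂ[X], q.natDegree ≤ n →
      wnormSq ω (1 - p * (X - C 1) ^ d) ≤ wnormSq ω (1 - q * (X - C 1) ^ d)) :
    ∃ Q : ℂ[X], Q.natDegree < d ∧
      ∀ k ≤ n + d, (1 - p * (X - C 1) ^ d).coeff k = Q.eval (k : ℂ) / ω k := by
  have hgdeg : ((X - C 1) ^ d : ℂ[X]).natDegree = d := by
    rw [natDegree_pow, natDegree_X_sub_C, mul_one]
  obtain ⟨Q, hQ, hbQ⟩ := exists_natDegree_lt_eval_eq_of_sum_coeff_eq_zero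
    (b := fun k => (ω k : ℂ) * (1 - p * (X - C 1) ^ d).coeff k) hd fun m hm => by
      have h := inner_weightedCoeffs_one_sub_mul_eq_zero (fun k => (hω k).le) hpdeg hpopt
        ((natDegree_X_pow_le m).trans hm)
      rw [inner_weightedCoeffs (fun k => (hω k).le), hgdeg] at h
      simpa only [← coeff_map, Polynomial.map_mul, Polynomial.map_pow, map_X, Polynomial.map_sub,
        map_C, map_one, Polynomial.map_one] using h
  refine ⟨Q, hQ, fun k hk => ?_⟩
  rw [← hbQ k hk, mul_div_cancel_left₀ _ (by exact_mod_cast (hω k).ne')]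

/-- The moments `∑ k, F.coeff k * k ^ i = δ_{i0}` of the residual `F`, rewritten through
`F.coeff k = Q k / ω k`, form the linear system `E β = e₁` for the coefficients `β` of `Q`. -/
lemma mapMatrix_momentMatrix_mulVec_eq_single {ω : ℕ → ℝ} {d n : ℕ} (hd : 0 < d) {p Q : ℂ[X]}
    (hpdeg : p.natDegree ≤ n) (hQ : Q.natDegree < d)
    (hcoeffQ : ∀ k ≤ n + d, (1 - p * (X - C 1) ^ d).coeff k = Q.eval (k : ℂ) / ω k) :
    Complex.ofRealHom.mapMatrix (momentMatrix ω (n + d + 1) d) *ᵥ (fun j : Fin d => Q.coeff j) =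
      Complex.ofRealHom ∘ Pi.single ⟨0, hd⟩ 1 := by
  have hdeg : (p * (X - C 1) ^ d).natDegree < n + d + 1 :=
    natDegree_mul_le.trans_lt (by rw [natDegree_pow, natDegree_X_sub_C]; omega)
  rw [mapMatrix_momentMatrix_mulVec hQ]
  ext i
  calc ∑ k ∈ range (n + d + 1), (k : ℂ) ^ (i : ℕ) * Q.eval (k : ℂ) / ω k
      = ∑ k ∈ range (n + d + 1), (1 - p * (X - C 1) ^ d).coeff k * (k : ℂ) ^ (i : ℕ) :=
        sum_congr rfl fun k hk => by
          rw [hcoeffQ k (by have := mem_range.1 hk; omega)]; ring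
    _ = 0 ^ (i : ℕ) := sum_range_coeff_one_sub_mul_pow (dvd_mul_left _ p) i.isLt hdeg
    _ = _ := by rcases i with ⟨_ | i, hi⟩ <;> simp [Fin.ext_iff]

theorem stmt17_general
    (ω : ℕ → ℝ) (hω0 : ω 0 = 1) (hωpos : ∀ k, 0 < ω k)
    (d : ℕ) (hd : 0 < d) (n : ℕ)
    (g : Polynomial ℂ) (hg : g = (Polynomial.X - Polynomial.C 1) ^ d)
    (p : Polynomial ℂ) (hpdeg : p.natDegree ≤ n)
    (hpopt : ∀ q : Polynomial ℂ, q.natDegree ≤ n →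
      wnormSq ω (1 - p * g) ≤ wnormSq ω (1 - q * g))
    (E : Matrix (Fin d) (Fin d) ℝ)
    (hE : ∀ i j : Fin d, E i j
      = ∑ k ∈ Finset.range (n + d + 1), (k : ℝ) ^ ((i : ℕ) + (j : ℕ)) / ω k) :
    IsUnit E.det ∧
    (∀ k : ℕ, k ≤ n + d →
      ((1 : Polynomial ℂ) - p * g).coeff k
        = (((∑ i : Fin d, E⁻¹ i ⟨0, hd⟩ * (k : ℝ) ^ (i : ℕ)) / ω k : ℝ) : ℂ)) ∧
    wnormSq ω (1 - p * g) = E⁻¹ ⟨0, hd⟩ ⟨0, hd⟩ ∧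
    ((1 : Polynomial ℂ) - p * g).eval 0 = ((E⁻¹ ⟨0, hd⟩ ⟨0, hd⟩ : ℝ) : ℂ) := by
  subst hg
  obtain ⟨Q, hQ, hcoeffQ⟩ := exists_natDegree_lt_coeff_one_sub_mul_eq hωpos hd hpdeg hpopt
  have hEmom : E = momentMatrix ω (n + d + 1) d := Matrix.ext hE
  have hunit : IsUnit E.det :=
    (isUnit_iff_isUnit_det E).1 (hEmom ▸ (momentMatrix_posDef hωpos (by omega)).isUnit)
  have hQcoeff := eq_comp_inv_mulVec_of_mapMatrix_mulVec_eq _ hunit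
    (hEmom ▸ mapMatrix_momentMatrix_mulVec_eq_single hd hpdeg hQ hcoeffQ)
  rw [mulVec_single_one] at hQcoeff
  have hcoeff : ∀ k ≤ n + d, (1 - p * (X - C 1) ^ d).coeff k
      = (((∑ i : Fin d, E⁻¹ i ⟨0, hd⟩ * (k : ℝ) ^ (i : ℕ)) / ω k : ℝ) : ℂ) := by
    intro k hk
    rw [hcoeffQ k hk, eval_eq_sum_range' hQ, ← Fin.sum_univ_eq_sum_range]
    push_cast
    congr 1
    refine sum_congr rfl fun i _ => ?_
    rw [congrFun hQcoeff i]
    rfl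
  have hcoeff0 : (1 - p * (X - C 1) ^ d).coeff 0 = ((E⁻¹ ⟨0, hd⟩ ⟨0, hd⟩ : ℝ) : ℂ) := by
    rw [hcoeff 0 (by omega), hω0, div_one, Fintype.sum_eq_single ⟨0, hd⟩ fun i hi => by
      rw [Nat.cast_zero, zero_pow (by simpa [Fin.ext_iff] using hi), mul_zero]]
    simp
  refine ⟨hunit, hcoeff, ?_, by rw [← coeff_zero_eq_eval_zero, hcoeff0]⟩
  have := wnormSq_one_sub_mul_eq (fun k => (hωpos k).le) hpdeg hpopt
  rw [hcoeff0, hω0, Complex.ofReal_one, one_mul] at this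
  exact_mod_cast this

theorem stmt17
    (ω : ℕ → ℝ) (hω0 : ω 0 = 1) (hωpos : ∀ k, 0 < ω k)
    (hωlim : Filter.Tendsto (fun k => ω k / ω (k + 1)) Filter.atTop (nhds 1))
    (d : ℕ) (hd : 0 < d) (n : ℕ)
    (g : Polynomial ℂ) (hg : g = (Polynomial.X - Polynomial.C 1) ^ d)
    (p : Polynomial ℂ) (hpdeg : p.natDegree ≤ n)
    (hpopt : ∀ q : Polynomial ℂ, q.natDegree ≤ n →
      wnormSq ω (1 - p * g) ≤ wnormSq ω (1 - q * g))
    (E : Matrix (Fin d) (Fin d) ℝ)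
    (hE : ∀ i j : Fin d, E i j
      = ∑ k ∈ Finset.range (n + d + 1), (k : ℝ) ^ ((i : ℕ) + (j : ℕ)) / ω k) :
    IsUnit E.det ∧
    (∀ k : ℕ, k ≤ n + d →
      ((1 : Polynomial ℂ) - p * g).coeff k
        = (((∑ i : Fin d, E⁻¹ i ⟨0, hd⟩ * (k : ℝ) ^ (i : ℕ)) / ω k : ℝ) : ℂ)) ∧
    wnormSq ω (1 - p * g) = E⁻¹ ⟨0, hd⟩ ⟨0, hd⟩ ∧
    ((1 : Polynomial ℂ) - p * g).eval 0 = ((E⁻¹ ⟨0, hd⟩ ⟨0, hd⟩ : ℝ) : ℂ) :=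
  stmt17_general ω hω0 hωpos d hd n g hg p hpdeg hpopt E hE
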